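/- For any two density operators ρ₀ and ρ₁ on a finite-dimensional Hilbert space, there exists a two-outcome projective measurement {Π₀, Π₁} with Π₀ + Π₁ = I such that (1/2)Tr(Π₀ρ₀) + (1/2)Tr(Π₁ρ₁) = (1/2)(1 + (1/2)‖ρ₀ − ρ₁‖₁). -/

import Mathlib

open Matrix Kronecker BigOperators ComplexOrder

noncomputable def traceNorm {n : Type*} [Fintype n] [DecidableEq n] (A : Matrix n n ℂ) : ℝ :=
  (let hA := Matrix.posSemidef_conjTranspose_mul_self A
   (hA.1.eigenvectorUnitary.1 * diagonal ((↑) ∘ (√·) ∘ hA.1.eigenvalues) *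
     (star hA.1.eigenvectorUnitary : Matrix n n ℂ) : Matrix n n ℂ)).trace.re

open scoped Classical in
noncomputable def matSqrt {n : Type*} [Fintype n] [DecidableEq n] (A : Matrix n n ℂ) : Matrix n n ℂ :=
  if h : A.PosSemidef then h.1.eigenvectorUnitary.1 * diagonal ((↑) ∘ (√·) ∘ h.1.eigenvalues) *
    (star h.1.eigenvectorUnitary : Matrix n n ℂ) else 0

noncomputable def fidelity {n : Type*} [Fintype n] [DecidableEq n] (ρ σ : Matrix n n ℂ) : ℝ :=
  (traceNorm (matSqrt ρ * matSqrt σ)) ^ 2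

def IsDensity {n : Type*} [Fintype n] [DecidableEq n] (ρ : Matrix n n ℂ) : Prop :=
  ρ.PosSemidef ∧ ρ.trace = 1

def SeparableState {a b : Type*} [Fintype a] [Fintype b] [DecidableEq a] [DecidableEq b]
    (ρ : Matrix (a × b) (a × b) ℂ) : Prop :=
  ∃ (m : ℕ) (p : Fin m → ℝ) (σ : Fin m → Matrix a a ℂ) (τ : Fin m → Matrix b b ℂ),
    (∀ i, 0 ≤ p i) ∧ (∑ i, p i = 1) ∧ (∀ i, IsDensity (σ i)) ∧ (∀ i, IsDensity (τ i)) ∧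
    ρ = ∑ i, (p i : ℂ) • (σ i ⊗ₖ τ i)

noncomputable def permUnitary {b : Type*} [Fintype b] [DecidableEq b] {k : ℕ}
    (π : Equiv.Perm (Fin k)) : Matrix (Fin k → b) (Fin k → b) ℂ :=
  Equiv.Perm.permMatrix ℂ (Equiv.arrowCongr π (Equiv.refl b))

def IsKExtension {a b : Type*} [Fintype a] [Fintype b] [DecidableEq a] [DecidableEq b] (m : ℕ)
    (ρ : Matrix (a × b) (a × b) ℂ)
    (ω : Matrix (a × (Fin (m + 1) → b)) (a × (Fin (m + 1) → b)) ℂ) : Prop :=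
  ω.PosSemidef ∧ ω.trace = 1 ∧
  (∀ π : Equiv.Perm (Fin (m + 1)),
    ((1 : Matrix a a ℂ) ⊗ₖ permUnitary π) * ω * ((1 : Matrix a a ℂ) ⊗ₖ permUnitary π)ᴴ = ω) ∧
  (∀ p q : a × b, ρ p q = ∑ r : Fin m → b, ω (p.1, Fin.cons p.2 r) (q.1, Fin.cons q.2 r))

/-- `ρ` is `k`-extendible (with `k` copies of the `B` system). -/
def IsKExtendible {a b : Type*} [Fintype a] [Fintype b] [DecidableEq a] [DecidableEq b] (k : ℕ)
    (ρ : Matrix (a × b) (a × b) ℂ) : Prop :=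
  ∃ m : ℕ, k = m + 1 ∧ ∃ ω, IsKExtension m ρ ω

def IsPOVM {x b : Type*} [Fintype x] [Fintype b] [DecidableEq b] (Λ : x → Matrix b b ℂ) : Prop :=
  (∀ i, (Λ i).PosSemidef) ∧ ∑ i, Λ i = 1

noncomputable def povmOut {a b x : Type*} [Fintype a] [Fintype b] [Fintype x] [DecidableEq x]
    (Λ : x → Matrix b b ℂ) (X : Matrix (a × b) (a × b) ℂ) : Matrix (a × x) (a × x) ℂ :=
  fun p q => if p.2 = q.2 then ∑ j : b, ∑ j' : b, (Λ p.2) j j' * X (p.1, j') (q.1, j) else 0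

noncomputable def loccDist {a b : Type*} [Fintype a] [Fintype b] [DecidableEq a] [DecidableEq b]
    (ρ σ : Matrix (a × b) (a × b) ℂ) : ℝ :=
  sSup {r : ℝ | ∃ (x : Type) (_ : Fintype x) (_ : DecidableEq x) (Λ : x → Matrix b b ℂ),
    IsPOVM Λ ∧ r = traceNorm (povmOut Λ ρ - povmOut Λ σ)}

/-! Let `Δ = ρ₀ - ρ₁` and let `Π₀` be its spectral projection onto the nonnegative eigenvalues,
`Π₁ = 1 - Π₀`. Then `Π₀ Δ = (Δ + |Δ|) / 2`, so
`Tr(Π₀ ρ₀) + Tr(Π₁ ρ₁) = Tr ρ₁ + Tr(Π₀ Δ) = 1 + ‖Δ‖₁ / 2`, using `Tr Δ = 0` and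
`‖Δ‖₁ = Tr |Δ|`; the latter holds because `√(Δᴴ Δ) = |Δ|` in the functional calculus of the
Hermitian matrix `Δ`. -/

namespace Matrix

variable {n : Type*} [Fintype n] [DecidableEq n]

theorem IsHermitian.re_trace_cfc {A : Matrix n n ℂ} (hA : A.IsHermitian) (f : ℝ → ℝ) :
    (cfc f A).trace.re = ∑ i, f (hA.eigenvalues i) := by
  rw [hA.cfc_eq, IsHermitian.cfc, Unitary.conjStarAlgAut_apply, trace_mul_comm, ← mul_assoc,
    Unitary.coe_star_mul_self, one_mul, trace_diagonal, Complex.re_sum]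
  rfl

theorem traceNorm_eq_re_trace_cfc_sqrt (A : Matrix n n ℂ) :
    traceNorm A = (cfc Real.sqrt (Aᴴ * A)).trace.re := by
  rw [(posSemidef_conjTranspose_mul_self A).1.cfc_eq, IsHermitian.cfc,
    Unitary.conjStarAlgAut_apply]
  rfl

theorem IsHermitian.traceNorm_eq_sum_abs_eigenvalues {A : Matrix n n ℂ} (hA : A.IsHermitian) :
    traceNorm A = ∑ i, |hA.eigenvalues i| := by
  have hsq : Aᴴ * A = cfc (fun x : ℝ => x * x) A := by
    rw [cfc_mul (fun x : ℝ => x) (fun x : ℝ => x) A, cfc_id' ℝ A, hA.eq]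
  have hsqrt : cfc Real.sqrt (Aᴴ * A) = cfc (fun x : ℝ => |x|) A := by
    rw [hsq, ← cfc_comp Real.sqrt (fun x : ℝ => x * x) A]
    exact cfc_congr fun x _ => Real.sqrt_mul_self_eq_abs x
  rw [traceNorm_eq_re_trace_cfc_sqrt, hsqrt, hA.re_trace_cfc]

/-- The step function is a genuine argument of `cfc` (not junk-valued): every function is
continuous on the finite spectrum of a matrix. -/
noncomputable def nonnegSpectralProj (A : Matrix n n ℂ) : Matrix n n ℂ :=
  cfc (fun x : ℝ => if 0 ≤ x then 1 else 0) A

theorem isHermitian_nonnegSpectralProj (A : Matrix n n ℂ) :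
    (nonnegSpectralProj A).IsHermitian :=
  cfc_predicate _ A

theorem isIdempotentElem_nonnegSpectralProj (A : Matrix n n ℂ) :
    IsIdempotentElem (nonnegSpectralProj A) := by
  rw [IsIdempotentElem, nonnegSpectralProj,
    ← cfc_mul _ _ A (A.finite_real_spectrum.continuousOn _) (A.finite_real_spectrum.continuousOn _)]
  exact cfc_congr fun x _ => by split_ifs <;> norm_num

theorem IsHermitian.nonnegSpectralProj_mul_eq_cfc {A : Matrix n n ℂ} (hA : A.IsHermitian) :
    nonnegSpectralProj A * A = cfc (fun x : ℝ => (x + |x|) / 2) A := by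
  nth_rw 2 [← cfc_id' ℝ A]
  rw [nonnegSpectralProj, ← cfc_mul _ _ A (A.finite_real_spectrum.continuousOn _)]
  refine cfc_congr fun x _ => ?_
  split_ifs with hx
  · rw [abs_of_nonneg hx]; ring
  · rw [abs_of_neg (not_le.mp hx)]; ring

theorem IsHermitian.re_trace_nonnegSpectralProj_mul {A : Matrix n n ℂ} (hA : A.IsHermitian) :
    (nonnegSpectralProj A * A).trace.re = (A.trace.re + traceNorm A) / 2 := by
  rw [hA.nonnegSpectralProj_mul_eq_cfc, hA.re_trace_cfc, hA.traceNorm_eq_sum_abs_eigenvalues,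
    hA.trace_eq_sum_eigenvalues, Complex.re_sum, ← Finset.sum_add_distrib, Finset.sum_div]
  rfl

end Matrix

theorem helstrom_measurement {n : Type*} [Fintype n] [DecidableEq n]
    (ρ₀ ρ₁ : Matrix n n ℂ) (h₀ : IsDensity ρ₀) (h₁ : IsDensity ρ₁) :
    ∃ P₀ P₁ : Matrix n n ℂ, P₀.IsHermitian ∧ P₁.IsHermitian ∧
      P₀ * P₀ = P₀ ∧ P₁ * P₁ = P₁ ∧ P₀ + P₁ = 1 ∧
      (1 / 2) * (P₀ * ρ₀).trace.re + (1 / 2) * (P₁ * ρ₁).trace.re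
        = (1 / 2) * (1 + (1 / 2) * traceNorm (ρ₀ - ρ₁)) := by
  have hΔ : (ρ₀ - ρ₁).IsHermitian := h₀.1.1.sub h₁.1.1
  have htrΔ : (ρ₀ - ρ₁).trace = 0 := by rw [trace_sub, h₀.2, h₁.2, sub_self]
  set P := nonnegSpectralProj (ρ₀ - ρ₁)
  have hP : (P * ρ₀).trace.re - (P * ρ₁).trace.re = (0 + traceNorm (ρ₀ - ρ₁)) / 2 := by
    rw [← Complex.sub_re, ← trace_sub, ← mul_sub, ← Complex.zero_re, ← htrΔ]
    exact hΔ.re_trace_nonnegSpectralProj_mul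
  refine ⟨P, 1 - P, isHermitian_nonnegSpectralProj _,
    isHermitian_one.sub (isHermitian_nonnegSpectralProj _),
    isIdempotentElem_nonnegSpectralProj _, (isIdempotentElem_nonnegSpectralProj _).one_sub,
    add_sub_cancel P 1, ?_⟩
  rw [sub_mul, one_mul, trace_sub, Complex.sub_re, h₁.2, Complex.one_re]
  linarith
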